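/- Assume additionally that each M_n takes values in the convex hull of {x_n^1,…,x_n^N}, and set α := E|1 − λ₀h − σ η| for η ~ N(0,h) and C̃ := 4√(3N) · max{Σ_{l=1}^d s_l, Σ_{l=1}^d s_l²}. Then for every n ≥ 0 and every i ∈ {1,…,N}, E‖x_{n+1}^i − x_n^i‖ ≤ 2(λ₀ + λ₁) h C̃ αⁿ + 2σ √(h C̃) ((1−λ₀h)² + σ²h)^{n/2}. -/

import Mathlib

/-!
Differences between particles evolve multiplicatively: in each coordinate `l`,
`x_n^i - x_n^j = Π_n^l (x_0^i - x_0^j)` with `Π_n^l = ∏_{k<n} (1 - λ₀h - σ W_k^l)`, because the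
pull towards `M_n` and the mean-field term act on all particles alike. Since `M_n` and `x̄_n` lie
in the convex hull of the swarm, `|x_n^{i,l} - M_n^l|` and `|x̄_n^l - M_n^l|` are at most
`2 G_l |Π_n^l|`, where `G_l = (∑_j (x_0^{j,l})⁴)^{1/4}` depends on the initial data only.
The noise `W_n` is independent of `G_l` and `Π_n^l`, so peeling off one factor at a time gives
`E[G_l |Π_n^l|] = αⁿ E[G_l]` and `E[G_l² (Π_n^l)² (W_n^l)²] = h βⁿ E[G_l²]` with
`β = (1 - λ₀h)² + σ²h`, while the Gaussian fourth moment gives `E[G_l²] ≤ √(3N) s_l²`.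
The drift part of the increment is then bounded in `L¹`, coordinate by coordinate, and the noise
part in `L²`.
-/

open MeasureTheory ProbabilityTheory Real Finset
open scoped NNReal

lemma sqrt_sum_sq_le_sum_add_sqrt_sum_sq {ι : Type*} [Fintype ι] {v a b : ι → ℝ}
    (ha : ∀ l, 0 ≤ a l) (hv : ∀ l, |v l| ≤ a l + b l) :
    √(∑ l, v l ^ 2) ≤ ∑ l, a l + √(∑ l, b l ^ 2) := by
  have hnorm (u : ι → ℝ) : ‖WithLp.toLp 2 u‖ = √(∑ l, u l ^ 2) := by
    simp [EuclideanSpace.norm_eq]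
  calc √(∑ l, v l ^ 2) ≤ √(∑ l, (a l + b l) ^ 2) :=
        sqrt_le_sqrt (sum_le_sum fun l _ => sq_le_sq' (abs_le.1 (hv l)).1 (abs_le.1 (hv l)).2)
    _ ≤ √(∑ l, a l ^ 2) + √(∑ l, b l ^ 2) := by
        simpa only [← WithLp.toLp_add, hnorm, Pi.add_apply] using
          norm_add_le (WithLp.toLp 2 a) (WithLp.toLp 2 b)
    _ ≤ ∑ l, a l + √(∑ l, b l ^ 2) := by
        gcongr
        refine sqrt_le_iff.2 ⟨sum_nonneg fun l _ => ha l, ?_⟩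
        exact sum_sq_le_sq_sum_of_nonneg fun l _ => ha l

lemma abs_sub_le_of_mem_convexHull {E ι : Type*} [AddCommGroup E] [Module ℝ E] (f : E →ₗ[ℝ] ℝ)
    {y : ι → E} {m : E} (hm : m ∈ convexHull ℝ (Set.range y)) {c r : ℝ}
    (hy : ∀ j, |f (y j) - c| ≤ r) : |f m - c| ≤ r := by
  have hsub : convexHull ℝ (Set.range y) ⊆ f ⁻¹' Metric.closedBall c r :=
    convexHull_min (Set.range_subset_iff.2 fun j => by simpa [Real.dist_eq] using hy j)
      ((convex_closedBall c r).linear_preimage f)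
  simpa [Real.dist_eq] using hsub hm

lemma abs_average_sub_le {N : ℕ} (hN : N ≠ 0) {a : Fin N → ℝ} {m r : ℝ}
    (h : ∀ j, |a j - m| ≤ r) : |1 / (N : ℝ) * ∑ j, a j - m| ≤ r := by
  have hN' : (0 : ℝ) < N := by positivity
  have havg : 1 / (N : ℝ) * ∑ j, a j - m = 1 / (N : ℝ) * ∑ j, (a j - m) := by
    rw [sum_sub_distrib, sum_const, card_univ, Fintype.card_fin, nsmul_eq_mul]
    field_simp
  rw [havg, abs_mul, abs_of_pos (by positivity)]
  calc 1 / (N : ℝ) * |∑ j, (a j - m)| ≤ 1 / (N : ℝ) * ∑ _j : Fin N, r := by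
        gcongr
        exact (abs_sum_le_sum_abs _ _).trans (sum_le_sum fun j _ => h j)
    _ = r := by rw [sum_const, card_univ, Fintype.card_fin, nsmul_eq_mul]; field_simp

lemma sub_eq_prod_mul_sub {ι : Type*} {y : ℕ → ι → ℝ} {a b : ℕ → ℝ}
    (hy : ∀ n i, y (n + 1) i = a n * y n i + b n) (n : ℕ) (i j : ι) :
    y n i - y n j = (∏ k ∈ range n, a k) * (y 0 i - y 0 j) := by
  induction n with
  | zero => simp
  | succ n ih => rw [hy, hy, prod_range_succ, mul_comm _ (a n), mul_assoc, ← ih]; ring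

noncomputable def envelope {ι : Type*} [Fintype ι] (y : ι → ℝ) : ℝ := √(√(∑ j, y j ^ 4))

section Envelope
variable {ι : Type*} [Fintype ι]

lemma envelope_nonneg (y : ι → ℝ) : 0 ≤ envelope y := sqrt_nonneg _

lemma envelope_pow_four (y : ι → ℝ) : envelope y ^ 4 = ∑ j, y j ^ 4 := by
  rw [envelope, show (4 : ℕ) = 2 * 2 from rfl, pow_mul, sq_sqrt (sqrt_nonneg _),
    sq_sqrt (sum_nonneg fun j _ => Even.pow_nonneg ⟨2, rfl⟩ _)]

lemma abs_le_envelope (y : ι → ℝ) (j : ι) : |y j| ≤ envelope y := by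
  refine le_of_pow_le_pow_left₀ four_ne_zero (envelope_nonneg y) ?_
  rw [envelope_pow_four, Even.pow_abs ⟨2, rfl⟩]
  exact single_le_sum (f := fun j => y j ^ 4) (fun j _ => Even.pow_nonneg ⟨2, rfl⟩ _) (mem_univ j)

@[fun_prop]
lemma continuous_envelope : Continuous (envelope : (ι → ℝ) → ℝ) := by
  unfold envelope; fun_prop

end Envelope

lemma integral_pow_four_gaussianReal (v : ℝ≥0) :
    ∫ x, x ^ 4 ∂gaussianReal 0 v = 3 * (v : ℝ) ^ 2 := by
  rcases eq_or_ne v 0 with rfl | hv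
  · simp [gaussianReal_zero_var]
  have hv' : 0 < (v : ℝ) := NNReal.coe_pos.mpr (pos_iff_ne_zero.mpr hv)
  have hb : 0 < (2 * (v : ℝ))⁻¹ := by positivity
  have hgamma : Gamma ((4 + 1) / 2) = 3 / 4 * √π := by
    rw [show ((4 : ℝ) + 1) / 2 = 1 / 2 + 1 + 1 by norm_num, Gamma_add_one (by norm_num),
      Gamma_add_one (by norm_num), Gamma_one_half_eq]
    ring
  -- after folding onto `(0, ∞)` the integral is `(2v)^{5/2} Γ(5/2) / 2` with `Γ(5/2) = 3√π/4`
  have hhalf : ∫ x in Set.Ioi (0 : ℝ), x ^ (4 : ℝ) * exp (-(2 * (v : ℝ))⁻¹ * x ^ (2 : ℝ))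
      = (2 * v) ^ 2 * √(2 * v) * (3 / 8 * √π) := by
    rw [integral_rpow_mul_exp_neg_mul_rpow two_pos (by norm_num) hb, hgamma,
      inv_rpow (by positivity), ← rpow_neg (by positivity),
      show -(-((4 : ℝ) + 1) / 2) = (2 : ℕ) + 1 / 2 by norm_num, rpow_add (by positivity),
      rpow_natCast, ← sqrt_eq_rpow]
    ring
  rw [integral_gaussianReal_eq_integral_smul hv]
  simp only [gaussianPDFReal_def, sub_zero, smul_eq_mul]
  calc ∫ x, (√(2 * π * v))⁻¹ * exp (-x ^ 2 / (2 * v)) * x ^ 4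
      = (√(2 * π * v))⁻¹ * ∫ x, |x| ^ (4 : ℝ) * exp (-(2 * (v : ℝ))⁻¹ * |x| ^ (2 : ℝ)) := by
        rw [← integral_const_mul]
        congr 1 with x
        rw [rpow_two, sq_abs, show (4 : ℝ) = (4 : ℕ) by norm_num, rpow_natCast,
          Even.pow_abs ⟨2, rfl⟩]
        ring_nf
    _ = 3 * (v : ℝ) ^ 2 := by
        rw [integral_comp_abs (f := fun x => x ^ (4 : ℝ) * exp (-(2 * (v : ℝ))⁻¹ * x ^ (2 : ℝ))),
          hhalf, show 2 * π * v = π * (2 * v) by ring, sqrt_mul pi_pos.le]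
        have : √(2 * (v : ℝ)) ^ 2 = 2 * v := sq_sqrt (by positivity)
        field_simp
        nlinarith [this]

lemma integral_sq_gaussianReal (μ : ℝ) (v : ℝ≥0) :
    ∫ x, x ^ 2 ∂gaussianReal μ v = μ ^ 2 + v := by
  have h := variance_eq_sub (memLp_id_gaussianReal (μ := μ) (v := v) 2)
  simp only [variance_id_gaussianReal, id_eq, Pi.pow_apply] at h
  rw [integral_id_gaussianReal] at h
  linarith

lemma integral_sq_const_sub_mul_gaussianReal (c σ : ℝ) (v : ℝ≥0) :
    ∫ y, (c - σ * y) ^ 2 ∂gaussianReal 0 v = c ^ 2 + σ ^ 2 * v := by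
  have hmap : (gaussianReal 0 v).map (fun y => c - σ * y)
      = gaussianReal c (.mk (σ ^ 2) (sq_nonneg _) * v) := by
    rw [show (fun y => c - σ * y) = (c - ·) ∘ (σ * ·) from rfl,
      ← Measure.map_map (by fun_prop) (by fun_prop), gaussianReal_map_const_mul,
      gaussianReal_map_const_sub]
    simp
  rw [← integral_map (φ := fun y => c - σ * y) (f := fun z => z ^ 2) (by fun_prop) (by fun_prop),
    hmap, integral_sq_gaussianReal]
  simp

lemma memLp_const_sub_mul_gaussianReal (c σ : ℝ) (v : ℝ≥0) (p : ℝ≥0) :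
    MemLp (fun y => c - σ * y) p (gaussianReal 0 v) :=
  (memLp_const c).sub ((memLp_id_gaussianReal p).const_mul σ)

section Probability

variable {Ω : Type*} {mΩ : MeasurableSpace Ω} {P : Measure Ω}

lemma integral_le_sqrt_integral_sq [IsProbabilityMeasure P] {Y : Ω → ℝ} (hY : MemLp Y 2 P) :
    ∫ ω, Y ω ∂P ≤ √(∫ ω, Y ω ^ 2 ∂P) := by
  have h := variance_nonneg Y P
  rw [variance_eq_sub hY, sub_nonneg] at h
  exact (le_abs_self _).trans (abs_le_sqrt h)

lemma ProbabilityTheory.HasLaw.integrable_comp {𝓧 : Type*} {m𝓧 : MeasurableSpace 𝓧}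
    {μ : Measure 𝓧} {X : Ω → 𝓧} (hX : HasLaw X μ P) {f : 𝓧 → ℝ} (hf : Integrable f μ) :
    Integrable (fun ω => f (X ω)) P := by
  rw [← hX.map_eq] at hf
  exact hf.comp_aemeasurable hX.aemeasurable

lemma indepFun_of_indep_comap {β : Type*} [MeasurableSpace β] {F : MeasurableSpace Ω} {X : Ω → β}
    (hind : Indep (MeasurableSpace.comap X inferInstance) F P) {Z : Ω → ℝ}
    (hZ : Measurable[F] Z) : IndepFun Z X P :=
  (IndepFun_iff_Indep Z X P).2 (indep_of_indep_of_le_left hind.symm hZ.comap_le)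

lemma integral_mul_prod_of_indep {F : ℕ → MeasurableSpace Ω} {Y : Ω → ℝ} {ξ : ℕ → Ω → ℝ}
    {a : ℝ} (hY : ∀ n, Measurable[F n] Y) (hYint : Integrable Y P)
    (hξ : ∀ k n, k < n → Measurable[F n] (ξ k))
    (hind : ∀ n, Indep (MeasurableSpace.comap (ξ n) inferInstance) (F n) P)
    (hξint : ∀ n, Integrable (ξ n) P) (hmean : ∀ n, ∫ ω, ξ n ω ∂P = a) (n : ℕ) :
    Integrable (fun ω => Y ω * ∏ k ∈ range n, ξ k ω) P ∧
      ∫ ω, Y ω * ∏ k ∈ range n, ξ k ω ∂P = a ^ n * ∫ ω, Y ω ∂P := by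
  induction n with
  | zero => simpa using hYint
  | succ n ih =>
    have hindep : IndepFun (fun ω => Y ω * ∏ k ∈ range n, ξ k ω) (ξ n) P :=
      indepFun_of_indep_comap (hind n)
        ((hY n).mul (Finset.measurable_prod _ fun k hk => hξ k n (mem_range.1 hk)))
    simp_rw [prod_range_succ, ← mul_assoc]
    refine ⟨hindep.integrable_mul ih.1 (hξint n), ?_⟩
    rw [hindep.integral_fun_mul_eq_mul_integral ih.1.aestronglyMeasurable
      (hξint n).aestronglyMeasurable, ih.2, hmean, pow_succ]
    ring

lemma integral_sqrt_sum_sq_le [IsProbabilityMeasure P] {ι : Type*} [Fintype ι] {f : ι → Ω → ℝ}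
    (hf2 : ∀ l, Integrable (fun ω => f l ω ^ 2) P) :
    Integrable (fun ω => √(∑ l, f l ω ^ 2)) P ∧
      ∫ ω, √(∑ l, f l ω ^ 2) ∂P ≤ √(∑ l, ∫ ω, f l ω ^ 2 ∂P) := by
  have hsum : Integrable (fun ω => ∑ l, f l ω ^ 2) P := integrable_finsetSum _ fun l _ => hf2 l
  have hmem : MemLp (fun ω => √(∑ l, f l ω ^ 2)) 2 P := by
    refine (memLp_two_iff_integrable_sq (continuous_sqrt.comp_aestronglyMeasurable
      hsum.aestronglyMeasurable)).2 (hsum.congr (ae_of_all _ fun ω => ?_))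
    exact (sq_sqrt (sum_nonneg fun l _ => sq_nonneg _)).symm
  refine ⟨hmem.integrable one_le_two, (integral_le_sqrt_integral_sq hmem).trans_eq ?_⟩
  rw [integral_congr_ae (ae_of_all _ fun ω => sq_sqrt (sum_nonneg fun l _ => sq_nonneg _)),
    integral_finsetSum _ fun l _ => hf2 l]

end Probability

section GaussianEnvelope

variable {Ω : Type*} {mΩ : MeasurableSpace Ω} {P : Measure Ω} [IsProbabilityMeasure P] {N : ℕ}
  {y : Fin N → Ω → ℝ} {v : ℝ≥0}

lemma integral_envelope_sq_le (hy : ∀ j, HasLaw (y j) (gaussianReal 0 v) P) :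
    Integrable (fun ω => envelope (fun j => y j ω) ^ 2) P ∧
      ∫ ω, envelope (fun j => y j ω) ^ 2 ∂P ≤ √(3 * N) * v := by
  have hG : AEStronglyMeasurable (fun ω => envelope (fun j => y j ω)) P :=
    (continuous_envelope.measurable.comp_aemeasurable
      (aemeasurable_pi_lambda _ fun j => (hy j).aemeasurable)).aestronglyMeasurable
  have h4 (j : Fin N) : Integrable (fun ω => y j ω ^ 4) P :=
    (hy j).integrable_comp (by simpa [Even.pow_abs ⟨2, rfl⟩] using
      (memLp_id_gaussianReal 4).integrable_norm_pow four_ne_zero)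
  have hG4 (ω : Ω) : (envelope (fun j => y j ω) ^ 2) ^ 2 = ∑ j, y j ω ^ 4 := by
    rw [← pow_mul, envelope_pow_four]
  have hmem : MemLp (fun ω => envelope (fun j => y j ω) ^ 2) 2 P :=
    (memLp_two_iff_integrable_sq (f := fun ω => envelope (fun j => y j ω) ^ 2) (hG.pow 2)).2 (by
      simpa only [hG4] using integrable_finsetSum _ fun j _ => h4 j)
  refine ⟨hmem.integrable one_le_two, (integral_le_sqrt_integral_sq hmem).trans_eq ?_⟩
  have hmoment (j : Fin N) : ∫ ω, y j ω ^ 4 ∂P = 3 * (v : ℝ) ^ 2 :=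
    ((hy j).integral_comp (f := fun x => x ^ 4) (by fun_prop)).trans
      (integral_pow_four_gaussianReal v)
  simp only [hG4, integral_finsetSum _ fun j _ => h4 j, hmoment, sum_const, card_univ,
    Fintype.card_fin, nsmul_eq_mul]
  rw [show (N : ℝ) * (3 * (v : ℝ) ^ 2) = 3 * N * (v : ℝ) ^ 2 by ring, sqrt_mul (by positivity),
    sqrt_sq v.coe_nonneg]

lemma integral_envelope_le (hy : ∀ j, HasLaw (y j) (gaussianReal 0 v) P) :
    Integrable (fun ω => envelope (fun j => y j ω)) P ∧
      ∫ ω, envelope (fun j => y j ω) ∂P ≤ √(3 * N) * √v := by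
  obtain ⟨hint, hle⟩ := integral_envelope_sq_le hy
  have hmem : MemLp (fun ω => envelope (fun j => y j ω)) 2 P :=
    (memLp_two_iff_integrable_sq (continuous_envelope.measurable.comp_aemeasurable
      (aemeasurable_pi_lambda _ fun j => (hy j).aemeasurable)).aestronglyMeasurable).2 hint
  refine ⟨hmem.integrable one_le_two, (integral_le_sqrt_integral_sq hmem).trans ?_⟩
  -- `√(√(3N)) ≤ √(3N)` because `3N` is either `0` or at least `1`
  have hroot : √(√(3 * N)) ≤ √(3 * N) := by
    refine sqrt_le_self_iff.2 ?_
    rcases Nat.eq_zero_or_pos N with rfl | hN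
    · simp
    · exact Or.inr (one_le_sqrt.2 (by norm_cast; omega))
  calc √(∫ ω, envelope (fun j => y j ω) ^ 2 ∂P) ≤ √(√(3 * N) * v) := sqrt_le_sqrt hle
    _ = √(√(3 * N)) * √v := sqrt_mul (sqrt_nonneg _) _
    _ ≤ √(3 * N) * √v := by gcongr

end GaussianEnvelope

namespace AdCBO

noncomputable def cumulativeMultiplier (lam0 h sigma : ℝ) (w : ℕ → ℝ) (n : ℕ) : ℝ :=
  ∏ k ∈ range n, (1 - lam0 * h - sigma * w k)

section Pathwise

variable {d N : ℕ} {lam0 lam1 h sigma : ℝ} {x : ℕ → Fin N → Fin d → ℝ} {w m : ℕ → Fin d → ℝ}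

lemma abs_sub_le_envelope_mul_cumulativeMultiplier
    (hrec : ∀ n i l, x (n + 1) i l = x n i l - lam0 * h * (x n i l - m n l)
      - lam1 * h * ((1 / (N : ℝ)) * ∑ j, x n j l - m n l) - sigma * (x n i l - m n l) * w n l)
    {n : ℕ} (hm : m n ∈ convexHull ℝ (Set.range (x n))) (i : Fin N) (l : Fin d) :
    |x n i l - m n l| ≤ 2 * (envelope (fun j => x 0 j l)
      * |cumulativeMultiplier lam0 h sigma (fun k => w k l) n|) := by
  have hdiff (j : Fin N) : x n j l - x n i l = cumulativeMultiplier lam0 h sigma (fun k => w k l) n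
      * (x 0 j l - x 0 i l) :=
    sub_eq_prod_mul_sub (y := fun n j => x n j l) (a := fun k => 1 - lam0 * h - sigma * w k l)
      (b := fun k => (lam0 * h + sigma * w k l) * m k l
        - lam1 * h * ((1 / (N : ℝ)) * ∑ j, x k j l - m k l))
      (fun n j => by rw [hrec]; ring) n j i
  rw [abs_sub_comm]
  refine abs_sub_le_of_mem_convexHull (LinearMap.proj l) hm fun j => ?_
  have hspread : |x 0 j l - x 0 i l| ≤ 2 * envelope (fun j => x 0 j l) :=
    (abs_sub _ _).trans ((add_le_add (abs_le_envelope (fun j => x 0 j l) j)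
      (abs_le_envelope (fun j => x 0 j l) i)).trans_eq (two_mul _).symm)
  simp only [LinearMap.proj_apply, hdiff, abs_mul]
  nlinarith [abs_nonneg (cumulativeMultiplier lam0 h sigma (fun k => w k l) n)]

lemma sqrt_sum_sq_increment_le (hlam0 : 0 ≤ lam0) (hlam1 : 0 ≤ lam1) (hh : 0 ≤ h)
    (hsigma : 0 ≤ sigma)
    (hrec : ∀ n i l, x (n + 1) i l = x n i l - lam0 * h * (x n i l - m n l)
      - lam1 * h * ((1 / (N : ℝ)) * ∑ j, x n j l - m n l) - sigma * (x n i l - m n l) * w n l)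
    {n : ℕ} (hm : m n ∈ convexHull ℝ (Set.range (x n))) (i : Fin N) :
    √(∑ l, (x (n + 1) i l - x n i l) ^ 2) ≤
      ∑ l, 2 * (lam0 + lam1) * h *
          (envelope (fun j => x 0 j l) * |cumulativeMultiplier lam0 h sigma (fun k => w k l) n|)
        + √(∑ l, (2 * sigma * (envelope (fun j => x 0 j l)
          * |cumulativeMultiplier lam0 h sigma (fun k => w k l) n|) * |w n l|) ^ 2) := by
  have hN : N ≠ 0 := by
    rintro rfl
    simp [Set.range_eq_empty] at hm
  have hc : 0 ≤ 2 * (lam0 + lam1) * h := by positivity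
  refine sqrt_sum_sq_le_sum_add_sqrt_sum_sq
    (fun l => mul_nonneg hc (mul_nonneg (envelope_nonneg _) (abs_nonneg _))) fun l => ?_
  set r := envelope (fun j => x 0 j l) * |cumulativeMultiplier lam0 h sigma (fun k => w k l) n|
  have hi := abs_sub_le_envelope_mul_cumulativeMultiplier hrec hm i l
  have hmean : |1 / (N : ℝ) * ∑ j, x n j l - m n l| ≤ 2 * r :=
    abs_average_sub_le hN fun j => abs_sub_le_envelope_mul_cumulativeMultiplier hrec hm j l
  rw [hrec, show ∀ a b c e : ℝ, a - b - c - e - a = -(b + c + e) by intros; ring, abs_neg]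
  refine (abs_add_three _ _ _).trans ?_
  simp only [abs_mul, abs_of_nonneg hlam0, abs_of_nonneg hlam1, abs_of_nonneg hh,
    abs_of_nonneg hsigma]
  have := abs_nonneg (w n l)
  nlinarith [mul_le_mul_of_nonneg_left hi (mul_nonneg hlam0 hh),
    mul_le_mul_of_nonneg_left hmean (mul_nonneg hlam1 hh),
    mul_le_mul_of_nonneg_left hi (mul_nonneg hsigma this)]

end Pathwise

section History

variable {Ω : Type*} {mΩ : MeasurableSpace Ω} {P : Measure Ω} {d N : ℕ}

abbrev history (x₀ : Fin N → Ω → Fin d → ℝ) (W : ℕ → Ω → Fin d → ℝ) (n : ℕ) : MeasurableSpace Ω :=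
  (⨆ i, MeasurableSpace.comap (x₀ i) inferInstance) ⊔
    (⨆ k : Fin n, MeasurableSpace.comap (W k) inferInstance)

variable {x₀ : Fin N → Ω → Fin d → ℝ} {W : ℕ → Ω → Fin d → ℝ} {lam0 h sigma : ℝ}

lemma measurable_history_initial (n : ℕ) (j : Fin N) (l : Fin d) :
    Measurable[history x₀ W n] (fun ω => x₀ j ω l) :=
  (measurable_pi_apply l).comp (Measurable.of_comap_le
    ((le_iSup (fun i => MeasurableSpace.comap (x₀ i) inferInstance) j).trans le_sup_left))

lemma measurable_history_envelope (n : ℕ) (l : Fin d) :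
    Measurable[history x₀ W n] (fun ω => envelope (fun j => x₀ j ω l)) :=
  continuous_envelope.measurable.comp
    (@measurable_pi_lambda _ _ _ (history x₀ W n) _ _ fun j => measurable_history_initial n j l)

lemma measurable_history_noise {k n : ℕ} (hk : k < n) (l : Fin d) :
    Measurable[history x₀ W n] (fun ω => W k ω l) :=
  (measurable_pi_apply l).comp (Measurable.of_comap_le
    ((le_iSup (fun k : Fin n => MeasurableSpace.comap (W k) inferInstance) ⟨k, hk⟩).trans
      le_sup_right))

lemma measurable_history_cumulativeMultiplier (n : ℕ) (l : Fin d) :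
    Measurable[history x₀ W n]
      (fun ω => cumulativeMultiplier lam0 h sigma (fun k => W k ω l) n) :=
  Finset.measurable_prod _ fun _ hk =>
    measurable_const.sub ((measurable_history_noise (mem_range.1 hk) l).const_mul sigma)

lemma integral_mul_prod_comp_noise (hW : ∀ k, Measurable (W k)) {l : Fin d} {γ : Measure ℝ}
    (hWlaw : ∀ k, P.map (fun ω => W k ω l) = γ)
    (hWpast : ∀ n, Indep (MeasurableSpace.comap (W n) inferInstance) (history x₀ W n) P)
    {Y : Ω → ℝ} (hY : ∀ n, Measurable[history x₀ W n] Y) (hYint : Integrable Y P)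
    {φ : ℝ → ℝ} (hφ : Measurable φ) (hφint : Integrable φ γ) (n : ℕ) :
    Integrable (fun ω => Y ω * ∏ k ∈ range n, φ (W k ω l)) P ∧
      ∫ ω, Y ω * ∏ k ∈ range n, φ (W k ω l) ∂P = (∫ y, φ y ∂γ) ^ n * ∫ ω, Y ω ∂P := by
  have hlaw (k : ℕ) : HasLaw (fun ω => W k ω l) γ P :=
    ⟨((measurable_pi_apply l).comp (hW k)).aemeasurable, hWlaw k⟩
  refine integral_mul_prod_of_indep hY hYint
    (fun k n hk => hφ.comp (measurable_history_noise hk l)) (fun n => ?_)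
    (fun k => (hlaw k).integrable_comp hφint)
    (fun k => (hlaw k).integral_comp hφ.aestronglyMeasurable) n
  exact indep_of_indep_of_le_left (hWpast n)
    (hφ.comp ((measurable_pi_apply l).comp (comap_measurable (W n)))).comap_le

end History

section Moments

variable {Ω : Type*} {mΩ : MeasurableSpace Ω} {P : Measure Ω} [IsProbabilityMeasure P] {d N : ℕ}
  {x₀ : Fin N → Ω → Fin d → ℝ} {W : ℕ → Ω → Fin d → ℝ} {lam0 h sigma : ℝ}

lemma integral_envelope_mul_abs_cumulativeMultiplier_le (hW : ∀ k, Measurable (W k)) {l : Fin d}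
    (hWlaw : ∀ k, P.map (fun ω => W k ω l) = gaussianReal 0 h.toNNReal)
    (hWpast : ∀ n, Indep (MeasurableSpace.comap (W n) inferInstance) (history x₀ W n) P)
    {v : ℝ≥0} (hx₀ : ∀ j, HasLaw (fun ω => x₀ j ω l) (gaussianReal 0 v) P) (n : ℕ) :
    Integrable (fun ω => envelope (fun j => x₀ j ω l)
        * |cumulativeMultiplier lam0 h sigma (fun k => W k ω l) n|) P ∧
      ∫ ω, envelope (fun j => x₀ j ω l)
          * |cumulativeMultiplier lam0 h sigma (fun k => W k ω l) n| ∂P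
        ≤ (∫ y, |1 - lam0 * h - sigma * y| ∂gaussianReal 0 h.toNNReal) ^ n * (√(3 * N) * √v) := by
  obtain ⟨hGint, hGle⟩ := integral_envelope_le hx₀
  obtain ⟨hint, heq⟩ := integral_mul_prod_comp_noise hW hWlaw hWpast
    (measurable_history_envelope · l) hGint (φ := fun y => |1 - lam0 * h - sigma * y|)
    (by fun_prop) ((memLp_const_sub_mul_gaussianReal _ _ _ 1).integrable le_rfl).abs n
  simp only [cumulativeMultiplier, abs_prod]
  refine ⟨hint, heq.trans_le ?_⟩
  gcongr

lemma integral_envelope_sq_mul_cumulativeMultiplier_sq_mul_sq_le (hh : 0 ≤ h)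
    (hW : ∀ k, Measurable (W k)) {l : Fin d}
    (hWlaw : ∀ k, P.map (fun ω => W k ω l) = gaussianReal 0 h.toNNReal)
    (hWpast : ∀ n, Indep (MeasurableSpace.comap (W n) inferInstance) (history x₀ W n) P)
    {v : ℝ≥0} (hx₀ : ∀ j, HasLaw (fun ω => x₀ j ω l) (gaussianReal 0 v) P) (n : ℕ) :
    Integrable (fun ω => envelope (fun j => x₀ j ω l) ^ 2
        * cumulativeMultiplier lam0 h sigma (fun k => W k ω l) n ^ 2 * W n ω l ^ 2) P ∧
      ∫ ω, envelope (fun j => x₀ j ω l) ^ 2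
          * cumulativeMultiplier lam0 h sigma (fun k => W k ω l) n ^ 2 * W n ω l ^ 2 ∂P
        ≤ h * ((1 - lam0 * h) ^ 2 + sigma ^ 2 * h) ^ n * (√(3 * N) * v) := by
  obtain ⟨hGint, hGle⟩ := integral_envelope_sq_le hx₀
  obtain ⟨hint, heq⟩ := integral_mul_prod_comp_noise hW hWlaw hWpast
    (fun n => (measurable_history_envelope n l).pow_const 2) hGint
    (φ := fun y => (1 - lam0 * h - sigma * y) ^ 2) (by fun_prop)
    (memLp_const_sub_mul_gaussianReal _ _ _ 2).integrable_sq n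
  simp only [prod_pow] at hint heq
  rw [integral_sq_const_sub_mul_gaussianReal, Real.coe_toNNReal _ hh] at heq
  have hlaw : HasLaw (fun ω => W n ω l) (gaussianReal 0 h.toNNReal) P :=
    ⟨((measurable_pi_apply l).comp (hW n)).aemeasurable, hWlaw n⟩
  have hWsq : Integrable (fun ω => W n ω l ^ 2) P :=
    hlaw.integrable_comp (f := fun y => y ^ 2) ((memLp_id_gaussianReal 2).integrable_sq)
  have hindep : IndepFun (fun ω => envelope (fun j => x₀ j ω l) ^ 2
      * cumulativeMultiplier lam0 h sigma (fun k => W k ω l) n ^ 2) (fun ω => W n ω l ^ 2) P :=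
    (indepFun_of_indep_comap (hWpast n) (((measurable_history_envelope n l).pow_const 2).mul
      ((measurable_history_cumulativeMultiplier n l).pow_const 2))).comp measurable_id
      ((measurable_pi_apply l).pow_const 2)
  refine ⟨hindep.integrable_mul hint hWsq, ?_⟩
  have hWmoment : ∫ ω, W n ω l ^ 2 ∂P = h :=
    (hlaw.integral_comp (f := fun y => y ^ 2) (by fun_prop)).trans (by
      rw [integral_sq_gaussianReal, Real.coe_toNNReal _ hh]; ring)
  rw [hindep.integral_fun_mul_eq_mul_integral hint.aestronglyMeasurable hWsq.aestronglyMeasurable]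
  simp only [cumulativeMultiplier]
  rw [heq, hWmoment, mul_comm, ← mul_assoc]
  gcongr

end Moments

section IncrementBounds

variable {Ω : Type*} {mΩ : MeasurableSpace Ω} {P : Measure Ω} [IsProbabilityMeasure P] {d N : ℕ}
  {x₀ : Fin N → Ω → Fin d → ℝ} {W : ℕ → Ω → Fin d → ℝ} {lam0 h sigma : ℝ} {s : Fin d → ℝ}

lemma sqrt_mul_le_four_mul_sqrt_mul_max (hs : ∀ l, 0 ≤ s l) {a : ℝ}
    (ha : a ≤ max (∑ l, s l) (∑ l, s l ^ 2)) :
    √(3 * N) * a ≤ 4 * √(3 * N) * max (∑ l, s l) (∑ l, s l ^ 2) := by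
  have hmax : 0 ≤ max (∑ l, s l) (∑ l, s l ^ 2) :=
    (sum_nonneg fun l _ => hs l).trans (le_max_left _ _)
  nlinarith [mul_le_mul_of_nonneg_left ha (sqrt_nonneg (3 * N)),
    mul_nonneg (sqrt_nonneg (3 * N)) hmax]

lemma integral_drift_le (hW : ∀ k, Measurable (W k))
    (hWlaw : ∀ k l, P.map (fun ω => W k ω l) = gaussianReal 0 h.toNNReal)
    (hWpast : ∀ n, Indep (MeasurableSpace.comap (W n) inferInstance) (history x₀ W n) P)
    (hs : ∀ l, 0 ≤ s l)
    (hx₀ : ∀ j l, HasLaw (fun ω => x₀ j ω l) (gaussianReal 0 (s l ^ 2).toNNReal) P)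
    {c : ℝ} (hc : 0 ≤ c) (n : ℕ) :
    Integrable (fun ω => ∑ l, c * (envelope (fun j => x₀ j ω l)
        * |cumulativeMultiplier lam0 h sigma (fun k => W k ω l) n|)) P ∧
      ∫ ω, ∑ l, c * (envelope (fun j => x₀ j ω l)
          * |cumulativeMultiplier lam0 h sigma (fun k => W k ω l) n|) ∂P
        ≤ c * (4 * √(3 * N) * max (∑ l, s l) (∑ l, s l ^ 2))
          * (∫ y, |1 - lam0 * h - sigma * y| ∂gaussianReal 0 h.toNNReal) ^ n := by
  have hE (l : Fin d) := integral_envelope_mul_abs_cumulativeMultiplier_le (lam0 := lam0)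
    (sigma := sigma) hW (hWlaw · l) hWpast (hx₀ · l) n
  have hsqrt (l : Fin d) : √((s l ^ 2).toNNReal : ℝ) = s l := by
    rw [Real.coe_toNNReal _ (sq_nonneg _), sqrt_sq (hs l)]
  have hα : 0 ≤ ∫ y, |1 - lam0 * h - sigma * y| ∂gaussianReal 0 h.toNNReal :=
    integral_nonneg fun y => abs_nonneg _
  refine ⟨integrable_finsetSum _ fun l _ => (hE l).1.const_mul c, ?_⟩
  rw [integral_finsetSum _ fun l _ => (hE l).1.const_mul c]
  simp only [integral_const_mul, ← mul_sum]
  calc c * ∑ l, ∫ ω, envelope (fun j => x₀ j ω l)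
          * |cumulativeMultiplier lam0 h sigma (fun k => W k ω l) n| ∂P
      ≤ c * ∑ l, (∫ y, |1 - lam0 * h - sigma * y| ∂gaussianReal 0 h.toNNReal) ^ n
          * (√(3 * N) * s l) := by
        gcongr with l
        simpa only [hsqrt] using (hE l).2
    _ = c * (√(3 * N) * ∑ l, s l)
          * (∫ y, |1 - lam0 * h - sigma * y| ∂gaussianReal 0 h.toNNReal) ^ n := by
        simp only [← mul_sum, mul_left_comm _ (√(3 * N) : ℝ)]
        ring
    _ ≤ _ := mul_le_mul_of_nonneg_right (mul_le_mul_of_nonneg_left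
        (sqrt_mul_le_four_mul_sqrt_mul_max hs (le_max_left _ _)) hc) (pow_nonneg hα n)

lemma integral_noise_le (hh : 0 ≤ h) (hsigma : 0 ≤ sigma) (hW : ∀ k, Measurable (W k))
    (hWlaw : ∀ k l, P.map (fun ω => W k ω l) = gaussianReal 0 h.toNNReal)
    (hWpast : ∀ n, Indep (MeasurableSpace.comap (W n) inferInstance) (history x₀ W n) P)
    (hs : ∀ l, 0 ≤ s l)
    (hx₀ : ∀ j l, HasLaw (fun ω => x₀ j ω l) (gaussianReal 0 (s l ^ 2).toNNReal) P) (n : ℕ) :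
    Integrable (fun ω => √(∑ l, (2 * sigma * (envelope (fun j => x₀ j ω l)
        * |cumulativeMultiplier lam0 h sigma (fun k => W k ω l) n|) * |W n ω l|) ^ 2)) P ∧
      ∫ ω, √(∑ l, (2 * sigma * (envelope (fun j => x₀ j ω l)
          * |cumulativeMultiplier lam0 h sigma (fun k => W k ω l) n|) * |W n ω l|) ^ 2) ∂P
        ≤ 2 * sigma * √(h * (4 * √(3 * N) * max (∑ l, s l) (∑ l, s l ^ 2)))
          * ((1 - lam0 * h) ^ 2 + sigma ^ 2 * h) ^ ((n : ℝ) / 2) := by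
  set C := 4 * √(3 * N) * max (∑ l, s l) (∑ l, s l ^ 2)
  set β := (1 - lam0 * h) ^ 2 + sigma ^ 2 * h
  have hE (l : Fin d) := integral_envelope_sq_mul_cumulativeMultiplier_sq_mul_sq_le (lam0 := lam0)
    (sigma := sigma) hh hW (hWlaw · l) hWpast (hx₀ · l) n
  have hsq (l : Fin d) (ω : Ω) : (2 * sigma * (envelope (fun j => x₀ j ω l)
      * |cumulativeMultiplier lam0 h sigma (fun k => W k ω l) n|) * |W n ω l|) ^ 2
      = 4 * sigma ^ 2 * (envelope (fun j => x₀ j ω l) ^ 2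
        * cumulativeMultiplier lam0 h sigma (fun k => W k ω l) n ^ 2 * W n ω l ^ 2) := by
    simp only [mul_pow, sq_abs]
    ring
  refine (integral_sqrt_sum_sq_le fun l => ?_).imp_right fun hle => hle.trans ?_
  · simpa only [hsq] using (hE l).1.const_mul (4 * sigma ^ 2)
  have hβ : 0 ≤ β := by positivity
  refine (sqrt_le_sqrt (y := (2 * sigma) ^ 2 * (h * C) * β ^ n) ?_).trans_eq ?_
  · simp only [hsq, integral_const_mul]
    calc ∑ l, 4 * sigma ^ 2 * ∫ ω, envelope (fun j => x₀ j ω l) ^ 2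
            * cumulativeMultiplier lam0 h sigma (fun k => W k ω l) n ^ 2 * W n ω l ^ 2 ∂P
        ≤ ∑ l, 4 * sigma ^ 2 * (h * β ^ n * (√(3 * N) * s l ^ 2)) := by
          gcongr with l
          simpa only [Real.coe_toNNReal _ (sq_nonneg _)] using (hE l).2
      _ = (2 * sigma) ^ 2 * h * β ^ n * (√(3 * N) * ∑ l, s l ^ 2) := by
          simp only [← mul_sum]
          ring
      _ ≤ (2 * sigma) ^ 2 * h * β ^ n * C :=
          mul_le_mul_of_nonneg_left (sqrt_mul_le_four_mul_sqrt_mul_max hs (le_max_right _ _))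
            (by positivity)
      _ = (2 * sigma) ^ 2 * (h * C) * β ^ n := by ring
  · rw [sqrt_mul (by positivity), sqrt_mul (by positivity), sqrt_sq (by positivity),
      sqrt_eq_rpow (β ^ n), ← rpow_natCast, ← rpow_mul hβ, mul_one_div]

end IncrementBounds

end AdCBO

theorem adCBO_increment_bound_general
    {Ω : Type*} [MeasurableSpace Ω] (P : Measure Ω) [IsProbabilityMeasure P]
    (d N : ℕ) (h lam0 lam1 sigma : ℝ)
    (hh : 0 < h) (hlam0 : 0 < lam0) (hlam1 : 0 ≤ lam1) (hsigma : 0 ≤ sigma)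
    (W : ℕ → Ω → Fin d → ℝ) (x : ℕ → Fin N → Ω → Fin d → ℝ)
    (M : ℕ → Ω → Fin d → ℝ)
    (hWmeas : ∀ n, Measurable (W n))
    (hxmeas : ∀ n i, Measurable (x n i))
    (hWlaw : ∀ n l, Measure.map (fun ω => W n ω l) P
      = gaussianReal 0 (Real.toNNReal h))
    (hWpast : ∀ n, Indep (MeasurableSpace.comap (W n) inferInstance)
      ((⨆ i : Fin N, MeasurableSpace.comap (x 0 i) inferInstance) ⊔
        (⨆ k : Fin n, MeasurableSpace.comap (W k) inferInstance)) P)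
    (hrec : ∀ n i ω l,
      x (n+1) i ω l = x n i ω l - lam0 * h * (x n i ω l - M n ω l)
        - lam1 * h * ((1 / (N : ℝ)) * ∑ j, x n j ω l - M n ω l)
        - sigma * (x n i ω l - M n ω l) * W n ω l)
    -- Gaussian initial data: i.i.d. across particles and coordinates
    (s : Fin d → ℝ) (hs : ∀ l, 0 < s l)
    (hx0law : ∀ (i : Fin N) (l : Fin d),
      Measure.map (fun ω => x 0 i ω l) P = gaussianReal 0 (Real.toNNReal ((s l) ^ 2)))
    -- `M_n` takes values in the convex hull of the swarm
    (hMconv : ∀ n ω, M n ω ∈ convexHull ℝ (Set.range fun i : Fin N => x n i ω)) :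
    ∀ (n : ℕ) (i : Fin N),
      ∫ ω, Real.sqrt (∑ l, (x (n + 1) i ω l - x n i ω l) ^ 2) ∂P
        ≤ 2 * (lam0 + lam1) * h * (4 * Real.sqrt (3 * N) * max (∑ l, s l) (∑ l, (s l) ^ 2))
            * (∫ y, |1 - lam0 * h - sigma * y| ∂(gaussianReal 0 (Real.toNNReal h))) ^ n
          + 2 * sigma
            * Real.sqrt (h * (4 * Real.sqrt (3 * N) * max (∑ l, s l) (∑ l, (s l) ^ 2)))
            * ((1 - lam0 * h) ^ 2 + sigma ^ 2 * h) ^ ((n : ℝ) / 2) := by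
  intro n i
  have hx₀ (j : Fin N) (l : Fin d) :
      HasLaw (fun ω => x 0 j ω l) (gaussianReal 0 (s l ^ 2).toNNReal) P :=
    ⟨((measurable_pi_apply l).comp (hxmeas 0 j)).aemeasurable, hx0law j l⟩
  obtain ⟨hDint, hD⟩ := AdCBO.integral_drift_le (lam0 := lam0) (sigma := sigma) (x₀ := x 0) hWmeas
    hWlaw hWpast (fun l => (hs l).le) hx₀ (c := 2 * (lam0 + lam1) * h) (by positivity) n
  obtain ⟨hSint, hS⟩ := AdCBO.integral_noise_le (lam0 := lam0) (x₀ := x 0) hh.le hsigma hWmeas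
    hWlaw hWpast (fun l => (hs l).le) hx₀ n
  have hpt (ω : Ω) := AdCBO.sqrt_sum_sq_increment_le hlam0.le hlam1 hh.le hsigma
    (x := fun n i => x n i ω) (m := fun n => M n ω) (w := fun n => W n ω)
    (fun n i l => hrec n i ω l) (hMconv n ω) i
  refine (integral_mono_of_nonneg (ae_of_all _ fun ω => sqrt_nonneg _) (hDint.add hSint)
    (ae_of_all _ hpt)).trans ?_
  rw [integral_add' hDint hSint]
  exact add_le_add hD hS

/-- One-step increment bound for Ad-CBO: with
`α := E|1 − λ₀h − ση|` and `C̃ := 4√(3N)·max{Σ_l s_l, Σ_l s_l²}`,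
`E‖x_{n+1}^i − x_n^i‖ ≤ 2(λ₀+λ₁)hC̃αⁿ + 2σ√(hC̃)((1−λ₀h)² + σ²h)^{n/2}`. -/
theorem adCBO_increment_bound
    {Ω : Type*} [MeasurableSpace Ω] (P : Measure Ω) [IsProbabilityMeasure P]
    (d N : ℕ) (h lam0 lam1 sigma : ℝ)
    (hh : 0 < h) (hlam0 : 0 < lam0) (hlam1 : 0 ≤ lam1) (hsigma : 0 ≤ sigma)
    (W : ℕ → Ω → Fin d → ℝ) (x : ℕ → Fin N → Ω → Fin d → ℝ)
    (M : ℕ → Ω → Fin d → ℝ)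
    (hWmeas : ∀ n, Measurable (W n))
    (hxmeas : ∀ n i, Measurable (x n i))
    (hWindep : iIndepFun
      (fun (p : ℕ × Fin d) ω => W p.1 ω p.2) P)
    (hWlaw : ∀ n l, Measure.map (fun ω => W n ω l) P
      = gaussianReal 0 (Real.toNNReal h))
    (hWpast : ∀ n, Indep (MeasurableSpace.comap (W n) inferInstance)
      ((⨆ i : Fin N, MeasurableSpace.comap (x 0 i) inferInstance) ⊔
        (⨆ k : Fin n, MeasurableSpace.comap (W k) inferInstance)) P)
    (hMmeas : ∀ n, @Measurable Ω (Fin d → ℝ)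
      ((⨆ i : Fin N, MeasurableSpace.comap (x 0 i) inferInstance) ⊔
        (⨆ k : Fin n, MeasurableSpace.comap (W k) inferInstance)) _ (M n))
    (hrec : ∀ n i ω l,
      x (n+1) i ω l = x n i ω l - lam0 * h * (x n i ω l - M n ω l)
        - lam1 * h * ((1 / (N : ℝ)) * ∑ j, x n j ω l - M n ω l)
        - sigma * (x n i ω l - M n ω l) * W n ω l)
    -- Gaussian initial data: i.i.d. across particles and coordinates
    (s : Fin d → ℝ) (hs : ∀ l, 0 < s l)
    (hx0indep : iIndepFun
      (fun (p : Fin N × Fin d) ω => x 0 p.1 ω p.2) P)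
    (hx0law : ∀ (i : Fin N) (l : Fin d),
      Measure.map (fun ω => x 0 i ω l) P = gaussianReal 0 (Real.toNNReal ((s l) ^ 2)))
    -- `M_n` takes values in the convex hull of the swarm
    (hMconv : ∀ n ω, M n ω ∈ convexHull ℝ (Set.range fun i : Fin N => x n i ω)) :
    ∀ (n : ℕ) (i : Fin N),
      ∫ ω, Real.sqrt (∑ l, (x (n + 1) i ω l - x n i ω l) ^ 2) ∂P
        ≤ 2 * (lam0 + lam1) * h * (4 * Real.sqrt (3 * N) * max (∑ l, s l) (∑ l, (s l) ^ 2))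
            * (∫ y, |1 - lam0 * h - sigma * y| ∂(gaussianReal 0 (Real.toNNReal h))) ^ n
          + 2 * sigma
            * Real.sqrt (h * (4 * Real.sqrt (3 * N) * max (∑ l, s l) (∑ l, (s l) ^ 2)))
            * ((1 - lam0 * h) ^ 2 + sigma ^ 2 * h) ^ ((n : ℝ) / 2) :=
  adCBO_increment_bound_general P d N h lam0 lam1 sigma hh hlam0 hlam1 hsigma W x M hWmeas hxmeas
    hWlaw hWpast hrec s hs hx0law hMconv
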